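/- Let M* ∈ C_SST and let i, j ∈ [n] be two items whose expected row sums are separated as Σ_{ℓ=1}^n M*_{iℓ} − Σ_{ℓ=1}^n M*_{jℓ} > √n·(log n)². Then, for n larger than a universal constant, the observed row sums satisfy P[Σ_{ℓ=1}^n Y_{jℓ} ≥ Σ_{ℓ=1}^n Y_{iℓ}] ≤ n^{−23}. -/

import Mathlib

open MeasureTheory ENNReal

noncomputable section

namespace SSTPaper

/-- Squared Frobenius norm of an `n × n` real matrix (as a function). -/
def frobSq {n : ℕ} (A : Fin n → Fin n → ℝ) : ℝ := ∑ i, ∑ j, (A i j) ^ 2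

/-- Trace inner product `⟨A, B⟩ = trace (Aᵀ B)`. -/
def tinner {n : ℕ} (A B : Fin n → Fin n → ℝ) : ℝ := ∑ i, ∑ j, A i j * B i j

/-- The SST class: shifted-skew-symmetric matrices with entries in `[0,1]` that are
`π`-SST for some permutation `π` (where `π` ranks `i` above `j` iff `π j < π i`). -/
def sstClass (n : ℕ) : Set (Fin n → Fin n → ℝ) :=
  {M | (∀ i j, 0 ≤ M i j ∧ M i j ≤ 1) ∧ (∀ i j, M j i = 1 - M i j) ∧
    ∃ π : Equiv.Perm (Fin n), ∀ i j k : Fin n, π j < π i → M j k ≤ M i k}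

/-- The set of SST matrices faithful to a given permutation `π`. -/
def sstOf {n : ℕ} (π : Equiv.Perm (Fin n)) : Set (Fin n → Fin n → ℝ) :=
  {M | (∀ i j, 0 ≤ M i j ∧ M i j ≤ 1) ∧ (∀ i j, M j i = 1 - M i j) ∧
    ∀ i j k : Fin n, π j < π i → M j k ≤ M i k}

/-- Size of the largest indifference set of `M`: the maximal number of identical rows. -/
def kmaxM {n : ℕ} (M : Fin n → Fin n → ℝ) : ℕ :=
  Finset.univ.sup fun i => Set.ncard {j : Fin n | M j = M i}

/-- Number of indifference sets of `M`: the number of distinct rows. -/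
def numSets {n : ℕ} (M : Fin n → Fin n → ℝ) : ℕ := Set.ncard (Set.range M)

/-- SST matrices having an indifference set of size at least `k`. -/
def sstClassK (n k : ℕ) : Set (Fin n → Fin n → ℝ) :=
  {M | M ∈ sstClass n ∧ k ≤ kmaxM M}

/-- SST matrices that respect some indifference-set partition of sizes `k`. -/
def sstClassPart (n s : ℕ) (k : Fin s → ℕ) : Set (Fin n → Fin n → ℝ) :=
  {M | M ∈ sstClass n ∧ ∃ P : Fin s → Finset (Fin n),
    (∀ a b, a ≠ b → Disjoint (P a) (P b)) ∧ (∀ a, (P a).card = k a) ∧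
    (∀ i : Fin n, ∃ a, i ∈ P a) ∧
    ∀ a b : Fin s, ∀ i ∈ P a, ∀ i' ∈ P a, ∀ j ∈ P b, ∀ j' ∈ P b, M i j = M i' j'}

/-- Bernoulli measure on `Bool` with success probability `p`. -/
def bern (p : ℝ) : Measure Bool :=
  (ENNReal.ofReal p) • Measure.dirac true + (ENNReal.ofReal (1 - p)) • Measure.dirac false

/-- The law of the observation matrix `Y`: entries on and above the diagonal independent,
`P[Y i j = 1] = M i j` for `i < j`, `Y j i = 1 - Y i j` off the diagonal, and fair coin
on the diagonal. -/
def obsMeasure {n : ℕ} (M : Fin n → Fin n → ℝ) : Measure (Fin n → Fin n → ℝ) :=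
  Measure.map (fun (ω : Fin n × Fin n → Bool) (i j : Fin n) =>
      if i < j then (if ω (i, j) then (1 : ℝ) else 0)
      else if j < i then 1 - (if ω (j, i) then (1 : ℝ) else 0)
      else (if ω (i, j) then (1 : ℝ) else 0))
    (Measure.pi fun p : Fin n × Fin n => bern (if p.1 = p.2 then 1 / 2 else M p.1 p.2))

/-- The risk `E ‖M̂(Y) − M*‖²_F` of an estimator. -/
def risk {n : ℕ} (Mhat : (Fin n → Fin n → ℝ) → Fin n → Fin n → ℝ)
    (Mstar : Fin n → Fin n → ℝ) : ℝ≥0∞ :=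
  ∫⁻ Y, ENNReal.ofReal (frobSq (Mhat Y - Mstar)) ∂(obsMeasure Mstar)

/-- The `(s, k)`-oracle risk. -/
def oracleRisk (n s : ℕ) (k : Fin s → ℕ) : ℝ≥0∞ :=
  ⨅ (Mhat : (Fin n → Fin n → ℝ) → Fin n → Fin n → ℝ) (_ : Measurable Mhat),
    ⨆ (Mstar : Fin n → Fin n → ℝ) (_ : Mstar ∈ sstClassPart n s k), risk Mhat Mstar

/-- The global adaptivity index of an estimator. -/
def adaptIndex {n : ℕ} (Mhat : (Fin n → Fin n → ℝ) → Fin n → Fin n → ℝ) : ℝ≥0∞ :=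
  ⨆ (s : ℕ) (k : Fin s → ℕ) (_ : ∀ a, 1 ≤ k a) (_ : ∑ a, k a = n) (_ : ∀ a, k a < n),
    (⨆ (Mstar : Fin n → Fin n → ℝ) (_ : Mstar ∈ sstClassPart n s k), risk Mhat Mstar) /
      oracleRisk n s k

/-- Number of wins of item `i`. -/
def winCount {n : ℕ} (Y : Fin n → Fin n → ℝ) (i : Fin n) : ℝ := ∑ j, Y i j

instance {n : ℕ} : MeasurableSpace (Equiv.Perm (Fin n)) := ⊤

/-- Uniform measure on a (finite) set. -/
def unifOn {α : Type*} [Fintype α] [MeasurableSpace α] (s : Set α) : Measure α :=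
  (s.ncard : ℝ≥0∞)⁻¹ • ∑ a ∈ (Set.toFinite s).toFinset, Measure.dirac a

/-! The observation is the image of independent coins `ω p`, one for each pair
`p = (min a b, max a b)`, under `Y a b = entryValue a b (ω (entryCoord a b))`. The difference of
the row sums of `j` and `i` is then a sum over the at most `2n` pairs meeting `i` or `j` of
independent terms with values in `[-1, 1]`, and by shifted skew-symmetry its mean is `-u`, where
`u` is the gap between the expected row sums. Hoeffding's inequality bounds the probability that
it is nonnegative by `exp (-u² / 4n)`, which is at most `n⁻²³` when `u > √n (log n)²` and
`log n ≥ 5`. -/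

open ProbabilityTheory
open scoped Finset

theorem measureReal_pi_sum_integral_add_le_sum_le {ι : Type*} [Fintype ι] {β : ι → Type*}
    [∀ k, MeasurableSpace (β k)] (μ : ∀ k, Measure (β k)) [∀ k, IsProbabilityMeasure (μ k)]
    {g : ∀ k, β k → ℝ} (hg : ∀ k, Measurable (g k)) {a b : ℝ}
    (hab : ∀ k x, g k x ∈ Set.Icc a b) (s : Finset ι) {ε : ℝ} (hε : 0 ≤ ε) :
    (Measure.pi μ).real {ω | ∑ k ∈ s, ∫ x, g k x ∂μ k + ε ≤ ∑ k ∈ s, g k (ω k)} ≤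
      Real.exp (-ε ^ 2 / (2 * (#s * ((b - a) / 2) ^ 2))) := by
  have hindep : iIndepFun (fun k ω ↦ g k (ω k) - ∫ x, g k x ∂μ k) (Measure.pi μ) :=
    iIndepFun_pi (X := fun k x ↦ g k x - ∫ y, g k y ∂μ k)
      fun k ↦ ((hg k).sub_const _).aemeasurable
  have hsubG : ∀ k ∈ s, HasSubgaussianMGF (fun ω ↦ g k (ω k) - ∫ x, g k x ∂μ k)
      ((‖b - a‖₊ / 2) ^ 2) (Measure.pi μ) := by
    intro k _
    have h := hasSubgaussianMGF_of_mem_Icc (μ := Measure.pi μ) (X := fun ω ↦ g k (ω k))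
      ((hg k).comp (measurable_pi_apply k)).aemeasurable (ae_of_all _ fun ω ↦ hab k (ω k))
    rwa [integral_comp_eval (hg k).aestronglyMeasurable] at h
  have hset : {ω : ∀ k, β k | ∑ k ∈ s, ∫ x, g k x ∂μ k + ε ≤ ∑ k ∈ s, g k (ω k)} =
      {ω | ε ≤ ∑ k ∈ s, (g k (ω k) - ∫ x, g k x ∂μ k)} := by
    simp_rw [Finset.sum_sub_distrib, le_sub_iff_add_le']
  rw [hset]
  refine (HasSubgaussianMGF.measure_sum_ge_le_of_iIndepFun hindep hsubG hε).trans_eq ?_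
  simp [div_pow, sq_abs]

theorem sum_sum_ite_eq_of_image_subset {ι κ R : Type*} [DecidableEq κ] [AddCommMonoid R]
    (s : Finset ι) (c : ι → κ) {t : Finset κ} (ht : s.image c ⊆ t) (v : ι → κ → R) :
    ∑ p ∈ t, ∑ l ∈ s, (if c l = p then v l p else 0) = ∑ l ∈ s, v l (c l) := by
  rw [Finset.sum_comm]
  refine Finset.sum_congr rfl fun l hl ↦ ?_
  rw [Finset.sum_ite_eq, if_pos (ht (Finset.mem_image_of_mem c hl))]

lemma isProbabilityMeasure_bern {p : ℝ} (h0 : 0 ≤ p) (h1 : p ≤ 1) :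
    IsProbabilityMeasure (bern p) :=
  ⟨by simp [bern, ← ENNReal.ofReal_add h0 (sub_nonneg.2 h1)]⟩

lemma integral_bern {p : ℝ} (h0 : 0 ≤ p) (h1 : p ≤ 1) (f : Bool → ℝ) :
    ∫ x, f x ∂bern p = p * f true + (1 - p) * f false := by
  rw [bern, integral_add_measure (.smul_measure .of_finite ofReal_ne_top)
    (.smul_measure .of_finite ofReal_ne_top), integral_smul_measure,
    integral_smul_measure, integral_dirac, integral_dirac, ENNReal.toReal_ofReal h0,
    ENNReal.toReal_ofReal (sub_nonneg.2 h1), smul_eq_mul, smul_eq_mul]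

def coinBias {n : ℕ} (M : Fin n → Fin n → ℝ) (p : Fin n × Fin n) : ℝ :=
  if p.1 = p.2 then 1 / 2 else M p.1 p.2

def entryCoord {n : ℕ} (a b : Fin n) : Fin n × Fin n := (min a b, max a b)

def entryValue {n : ℕ} (a b : Fin n) (x : Bool) : ℝ :=
  if b < a then 1 - (if x then 1 else 0) else (if x then 1 else 0)

def rowContribution {n : ℕ} (a : Fin n) (p : Fin n × Fin n) (x : Bool) : ℝ :=
  ∑ l, if entryCoord a l = p then entryValue a l x else 0

lemma entryCoord_injective {n : ℕ} (a : Fin n) : Function.Injective (entryCoord a) := by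
  intro l l' h
  simp only [entryCoord, Prod.mk.injEq, Fin.ext_iff, Fin.coe_min, Fin.coe_max] at h
  omega

lemma obsMeasure_eq_map {n : ℕ} (M : Fin n → Fin n → ℝ) :
    obsMeasure M = Measure.map (fun ω a b ↦ entryValue a b (ω (entryCoord a b)))
      (Measure.pi fun p ↦ bern (coinBias M p)) := by
  unfold obsMeasure
  congr 1
  funext ω a b
  rcases lt_trichotomy a b with h | rfl | h
  · simp [entryValue, entryCoord, h, h.not_gt, min_eq_left h.le, max_eq_right h.le]
  · simp [entryValue, entryCoord]
  · simp [entryValue, entryCoord, h, h.not_gt, min_eq_right h.le, max_eq_left h.le]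

lemma entryValue_mem_Icc {n : ℕ} (a b : Fin n) (x : Bool) : entryValue a b x ∈ Set.Icc 0 1 := by
  unfold entryValue; split_ifs <;> cases x <;> simp

lemma rowContribution_mem_Icc {n : ℕ} (a : Fin n) (p : Fin n × Fin n) (x : Bool) :
    rowContribution a p x ∈ Set.Icc 0 1 := by
  by_cases hp : ∃ l, entryCoord a l = p
  · obtain ⟨l, rfl⟩ := hp
    have hsingle : rowContribution a (entryCoord a l) x = entryValue a l x := by
      refine (Finset.sum_eq_single l (fun l' _ hl' ↦ ?_) (by simp)).trans (if_pos rfl)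
      exact if_neg ((entryCoord_injective a).ne hl')
    exact hsingle ▸ entryValue_mem_Icc a l x
  · simp only [not_exists] at hp
    simp [rowContribution, hp]

lemma sum_rowContribution {n : ℕ} (a : Fin n) {S : Finset (Fin n × Fin n)}
    (hS : Finset.univ.image (entryCoord a) ⊆ S) (ω : Fin n × Fin n → Bool) :
    ∑ p ∈ S, rowContribution a p (ω p) = ∑ l, entryValue a l (ω (entryCoord a l)) :=
  sum_sum_ite_eq_of_image_subset _ _ hS fun l p ↦ entryValue a l (ω p)

lemma coinBias_mem_Icc {n : ℕ} {M : Fin n → Fin n → ℝ} (hM : ∀ a b, 0 ≤ M a b ∧ M a b ≤ 1)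
    (p : Fin n × Fin n) : coinBias M p ∈ Set.Icc 0 1 := by
  unfold coinBias; split_ifs
  · norm_num
  · exact hM p.1 p.2

lemma integral_entryValue {n : ℕ} {M : Fin n → Fin n → ℝ}
    (hM : ∀ a b, 0 ≤ M a b ∧ M a b ≤ 1) (hskew : ∀ a b, M b a = 1 - M a b) (a b : Fin n) :
    ∫ x, entryValue a b x ∂bern (coinBias M (entryCoord a b)) = M a b := by
  obtain ⟨h0, h1⟩ := coinBias_mem_Icc hM (entryCoord a b)
  rw [integral_bern h0 h1]
  rcases lt_trichotomy a b with h | rfl | h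
  · simp [entryValue, entryCoord, coinBias, h.not_gt, h.ne, min_eq_left h.le,
      max_eq_right h.le]
  · have := hskew a a
    simp [entryValue, entryCoord, coinBias]
    linarith
  · simp [entryValue, entryCoord, coinBias, h, h.ne, min_eq_right h.le, max_eq_left h.le,
      hskew b a]

lemma sum_integral_rowContribution {n : ℕ} {M : Fin n → Fin n → ℝ}
    (hM : ∀ a b, 0 ≤ M a b ∧ M a b ≤ 1) (hskew : ∀ a b, M b a = 1 - M a b) (a : Fin n)
    {S : Finset (Fin n × Fin n)} (hS : Finset.univ.image (entryCoord a) ⊆ S) :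
    ∑ p ∈ S, ∫ x, rowContribution a p x ∂bern (coinBias M p) = ∑ l, M a l := by
  have hintegral : ∀ p, ∫ x, rowContribution a p x ∂bern (coinBias M p) =
      ∑ l, if entryCoord a l = p then ∫ x, entryValue a l x ∂bern (coinBias M p) else 0 := by
    intro p
    have hprob := isProbabilityMeasure_bern (coinBias_mem_Icc hM p).1 (coinBias_mem_Icc hM p).2
    simp only [rowContribution]
    rw [integral_finsetSum _ fun l _ ↦ .of_finite]
    refine Finset.sum_congr rfl fun l _ ↦ ?_
    split_ifs <;> simp
  simp_rw [hintegral, sum_sum_ite_eq_of_image_subset _ _ hS, integral_entryValue hM hskew]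

lemma card_image_entryCoord_union_le {n : ℕ} (i j : Fin n) :
    #(Finset.univ.image (entryCoord i) ∪ Finset.univ.image (entryCoord j)) ≤ 2 * n := by
  refine (Finset.card_union_le _ _).trans ?_
  have hi := Finset.card_image_le (s := Finset.univ) (f := entryCoord i)
  have hj := Finset.card_image_le (s := Finset.univ) (f := entryCoord j)
  rw [Finset.card_univ, Fintype.card_fin] at hi hj
  omega

theorem obsMeasure_sum_row_le_sum_row_le {n : ℕ} {M : Fin n → Fin n → ℝ}
    (hM : ∀ a b, 0 ≤ M a b ∧ M a b ≤ 1) (hskew : ∀ a b, M b a = 1 - M a b) (i j : Fin n)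
    (hij : ∑ l, M j l ≤ ∑ l, M i l) :
    obsMeasure M {Y | ∑ l, Y i l ≤ ∑ l, Y j l} ≤
      ENNReal.ofReal (Real.exp (-((∑ l, M i l) - ∑ l, M j l) ^ 2 / (4 * n))) := by
  classical
  have hprob := fun p ↦ isProbabilityMeasure_bern (coinBias_mem_Icc hM p).1 (coinBias_mem_Icc hM p).2
  set S := Finset.univ.image (entryCoord i) ∪ Finset.univ.image (entryCoord j)
  set g : Fin n × Fin n → Bool → ℝ := fun p x ↦ rowContribution j p x - rowContribution i p x
  have hg : ∀ p x, g p x ∈ Set.Icc (-1) 1 := fun p x ↦ by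
    have hi := rowContribution_mem_Icc i p x
    have hj := rowContribution_mem_Icc j p x
    constructor <;> linarith [hi.1, hi.2, hj.1, hj.2]
  have hmean : ∑ p ∈ S, ∫ x, g p x ∂bern (coinBias M p) = ∑ l, M j l - ∑ l, M i l := by
    rw [Finset.sum_congr rfl fun p _ ↦ integral_sub .of_finite .of_finite, Finset.sum_sub_distrib,
      sum_integral_rowContribution hM hskew j Finset.subset_union_right,
      sum_integral_rowContribution hM hskew i Finset.subset_union_left]
  have hrows : ∀ ω : Fin n × Fin n → Bool, ∑ p ∈ S, g p (ω p) =
      ∑ l, entryValue j l (ω (entryCoord j l)) - ∑ l, entryValue i l (ω (entryCoord i l)) := by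
    intro ω
    rw [Finset.sum_sub_distrib, sum_rowContribution j Finset.subset_union_right,
      sum_rowContribution i Finset.subset_union_left]
  have hE : MeasurableSet {Y : Fin n → Fin n → ℝ | ∑ l, Y i l ≤ ∑ l, Y j l} :=
    measurableSet_le (by fun_prop) (by fun_prop)
  rw [obsMeasure_eq_map, Measure.map_apply (measurable_of_countable _) hE,
    ← ofReal_measureReal]
  refine ENNReal.ofReal_le_ofReal ((measureReal_mono fun ω hω ↦ ?_).trans
    ((measureReal_pi_sum_integral_add_le_sum_le _ (fun p ↦ measurable_of_countable (g p)) hg S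
      (sub_nonneg.2 hij)).trans ?_))
  · simp only [Set.mem_ofPred_eq, Set.mem_preimage, hmean, hrows] at hω ⊢
    linarith
  · have hS : (0 : ℝ) < #S :=
      Nat.cast_pos.2 (Finset.card_pos.2 ⟨_, Finset.mem_union_left _ (Finset.mem_image_of_mem _
        (Finset.mem_univ i))⟩)
    have hcard : (#S : ℝ) ≤ 2 * n := by exact_mod_cast card_image_entryCoord_union_le i j
    rw [Real.exp_le_exp, neg_div, neg_div, neg_le_neg_iff,
      show ((1 : ℝ) - -1) / 2 = 1 by norm_num, one_pow, mul_one]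
    exact div_le_div_of_nonneg_left (sq_nonneg _) (by linarith) (by linarith)

lemma exp_neg_sq_div_le_inv_pow {n : ℕ} (hn : 243 ≤ n) {u : ℝ}
    (hu : √n * Real.log n ^ 2 < u) : Real.exp (-u ^ 2 / (4 * n)) ≤ ((n : ℝ) ^ 23)⁻¹ := by
  have hn0 : (0 : ℝ) < n := by positivity
  have hlog : 5 ≤ Real.log n := by
    rw [Real.le_log_iff_exp_le hn0, show (5 : ℝ) = (5 : ℕ) * 1 by norm_num, Real.exp_nat_mul]
    calc Real.exp 1 ^ 5 ≤ (3 : ℝ) ^ 5 := by gcongr; exact Real.exp_one_lt_three.le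
      _ ≤ (n : ℝ) := by norm_num; exact_mod_cast hn
  have hu2 : n * Real.log n ^ 4 < u ^ 2 := by
    calc (n : ℝ) * Real.log n ^ 4 = (√n * Real.log n ^ 2) ^ 2 := by
          rw [mul_pow, Real.sq_sqrt hn0.le]; ring
      _ < u ^ 2 := by gcongr
  rw [← Real.exp_log (pow_pos hn0 23), ← Real.exp_neg, Real.exp_le_exp, Real.log_pow,
    le_neg, ← neg_div, neg_neg, le_div_iff₀ (by positivity)]
  have hlog3 : (125 : ℝ) ≤ Real.log n ^ 3 := by
    nlinarith [pow_le_pow_left₀ (by norm_num) hlog 3]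
  have hnlog : 0 ≤ n * Real.log n := by positivity
  have hlog4 : 125 * (n * Real.log n) ≤ n * Real.log n ^ 4 := by
    have := mul_le_mul_of_nonneg_left hlog3 hnlog
    linarith [show (n : ℝ) * Real.log n ^ 4 = n * Real.log n * Real.log n ^ 3 by ring]
  push_cast
  linarith

/-- row-sum separation: if the expected row sums of items `i` and `j`
under `M* ∈ C_SST` are separated by more than `√n (log n)²`, then for `n` larger than
a universal constant, `P[Σ_ℓ Y_{jℓ} ≥ Σ_ℓ Y_{iℓ}] ≤ n⁻²³`. -/
theorem row_sum_separation :
    ∃ N : ℕ, ∀ n : ℕ, N ≤ n →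
      ∀ Mstar ∈ sstClass n, ∀ i j : Fin n,
        Real.sqrt n * (Real.log n) ^ 2 < (∑ l, Mstar i l) - ∑ l, Mstar j l →
        obsMeasure Mstar {Y | (∑ l, Y i l) ≤ ∑ l, Y j l} ≤
          ENNReal.ofReal (((n : ℝ) ^ 23)⁻¹) := by
  refine ⟨243, fun n hn M ⟨hM, hskew, _⟩ i j hsep ↦ ?_⟩
  have hij : ∑ l, M j l ≤ ∑ l, M i l := by
    have : 0 ≤ √n * Real.log n ^ 2 := by positivity
    linarith
  exact (obsMeasure_sum_row_le_sum_row_le hM hskew i j hij).trans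
    (ENNReal.ofReal_le_ofReal (exp_neg_sq_div_le_inv_pow hn hsep))

end SSTPaper
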